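/- arXiv:1701.08210 — 3 statements merged into one kernel-verified Lean document; each statement's English description precedes it below -/
import Mathlib

section
/- Let X and Y be complex Banach spaces, let E ⊆ X and T ⊆ Y be open sets, and let φ : E × T → ℂ be a function such that: (i) there is a constant M with |φ(x, t)| ≤ M for all (x, t) ∈ E × T; (ii) for each t ∈ T, the function x ↦ φ(x, t) is holomorphic (complex Fréchet differentiable) on E; and (iii) for each x ∈ E, the function t ↦ φ(x, t) is holomorphic on T. Then the induced map Φ : T → C_b(E, ℂ), where Φ(t) is the bounded continuous function x ↦ φ(x, t) and C_b(E, ℂ) carries the supremum norm, is holomorphic on T. -/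
/-!
Fix `t ∈ T` and a ball `B(t, r) ⊆ T`. For every `x ∈ E` the function `φ x` is holomorphic and
bounded by `M` on this ball, so Schwarz's lemma bounds its derivative at `t` by `2M/r` and its
first-order Taylor remainder at `t + h` by `6M‖h‖²/r²`, uniformly in `x`. By this uniformity the
derivatives `x ↦ D(φ x)(t) v` are uniform limits of difference quotients, which are continuous
in `x` because `φ` is holomorphic in `x`; so they assemble into a continuous linear map
`Y → C_b(E, ℂ)`, and the uniform remainder bound says that it is the derivative of `Φ` at `t`.
-/

open Metric Set Filter Topology Asymptotics
open scoped BoundedContinuousFunction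

section Calculus

variable {𝕜 : Type*} [NontriviallyNormedField 𝕜]
  {Y : Type*} [NormedAddCommGroup Y] [NormedSpace 𝕜 Y]
  {F : Type*} [NormedAddCommGroup F] [NormedSpace 𝕜 F]

theorem continuous_apply_of_norm_sub_sub_le_mul_sq {α : Type*} [TopologicalSpace α]
    {g : α → Y → F} {D : α → Y →L[𝕜] F} {t : Y} {r C : ℝ} (hr : 0 < r)
    (hg : ∀ s ∈ ball t r, Continuous fun x => g x s)
    (hD : ∀ x h, ‖h‖ < r → ‖g x (t + h) - g x t - D x h‖ ≤ C * ‖h‖ ^ 2) (v : Y) :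
    Continuous fun x => D x v := by
  have hsmall : ∀ᶠ s in 𝓝[≠] (0 : 𝕜), ‖s • v‖ < r :=
    eventually_nhdsWithin_of_eventually_nhds <|
      (continuous_id.smul continuous_const).norm.tendsto' (0 : 𝕜) 0 (by simp)
        |>.eventually (gt_mem_nhds hr)
  refine TendstoUniformly.continuous (p := 𝓝[≠] (0 : 𝕜))
    (F := fun s x => s⁻¹ • (g x (t + s • v) - g x t)) ?_ ?_
  · rw [Metric.tendstoUniformly_iff]
    intro ε hε
    have hbound : ∀ᶠ s in 𝓝[≠] (0 : 𝕜), C * ‖s‖ * ‖v‖ ^ 2 < ε :=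
      eventually_nhdsWithin_of_eventually_nhds <|
        (continuous_const.mul continuous_norm).mul continuous_const |>.tendsto' (0 : 𝕜) 0
          (by simp) |>.eventually (gt_mem_nhds hε)
    filter_upwards [hsmall, hbound, self_mem_nhdsWithin] with s hs hsε (hs0 : s ≠ 0) x
    have hquot : D x v - s⁻¹ • (g x (t + s • v) - g x t)
        = -(s⁻¹ • (g x (t + s • v) - g x t - D x (s • v))) := by
      simp only [map_smul, smul_sub, smul_smul, inv_mul_cancel₀ hs0, one_smul]
      abel
    calc dist (D x v) (s⁻¹ • (g x (t + s • v) - g x t))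
        = ‖s‖⁻¹ * ‖g x (t + s • v) - g x t - D x (s • v)‖ := by
          rw [dist_eq_norm, hquot, norm_neg, norm_smul, norm_inv]
      _ ≤ ‖s‖⁻¹ * (C * ‖s • v‖ ^ 2) := by gcongr; exact hD x _ hs
      _ = C * ‖s‖ * ‖v‖ ^ 2 := by
          rw [norm_smul]; field_simp
      _ < ε := hsε
  · refine (hsmall.mono fun s hs => ?_).frequently
    exact ((hg _ (by simpa using hs)).sub (hg t (mem_ball_self hr))).const_smul _

theorem hasFDerivAt_of_norm_sub_sub_le_mul_sq {f : Y → F} {f' : Y →L[𝕜] F} {t : Y} {r C : ℝ}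
    (hr : 0 < r) (hf : ∀ h, ‖h‖ < r → ‖f (t + h) - f t - f' h‖ ≤ C * ‖h‖ ^ 2) :
    HasFDerivAt f f' t := by
  rw [hasFDerivAt_iff_isLittleO_nhds_zero]
  have hO : (fun h => f (t + h) - f t - f' h) =O[𝓝 0] fun h : Y => ‖h‖ ^ 2 := by
    refine IsBigO.of_bound C ?_
    filter_upwards [ball_mem_nhds (0 : Y) hr] with h hh
    simpa using hf h (mem_ball_zero_iff.mp hh)
  exact hO.trans_isLittleO (isLittleO_norm_pow_id one_lt_two)

variable {α : Type*} [TopologicalSpace α]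

noncomputable def BoundedContinuousFunction.piCLM (D : α → Y →L[𝕜] F) {K : ℝ}
    (hD : ∀ x, ‖D x‖ ≤ K) (hcont : ∀ v, Continuous fun x => D x v) : Y →L[𝕜] α →ᵇ F :=
  have hb (v : Y) (x : α) : ‖D x v‖ ≤ max K 0 * ‖v‖ :=
    (D x).le_of_opNorm_le ((hD x).trans (le_max_left K 0)) v
  LinearMap.mkContinuous
    { toFun v := .ofNormedAddCommGroup (fun x => D x v) (hcont v) _ (hb v)
      map_add' v w := by ext x; simp
      map_smul' c v := by ext x; simp }
    (max K 0) fun v => norm_ofNormedAddCommGroup_le _ (by positivity) (hb v)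

@[simp]
theorem BoundedContinuousFunction.piCLM_apply_apply (D : α → Y →L[𝕜] F) {K : ℝ}
    (hD : ∀ x, ‖D x‖ ≤ K) (hcont : ∀ v, Continuous fun x => D x v) (v : Y) (x : α) :
    piCLM D hD hcont v x = D x v :=
  rfl

end Calculus

theorem mapsTo_closedBall_two_mul_of_forall_norm_le {α F : Type*} [SeminormedAddCommGroup F]
    {g : α → F} {s : Set α} {c : α} {M : ℝ} (hc : c ∈ s) (hbd : ∀ x ∈ s, ‖g x‖ ≤ M) :
    MapsTo g s (closedBall (g c) (2 * M)) := fun x hx => by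
  rw [mem_closedBall, dist_eq_norm]
  linarith [norm_sub_le (g x) (g c), hbd x hx, hbd c hc]

section CauchyEstimates

variable {Y : Type*} [NormedAddCommGroup Y] [NormedSpace ℂ Y]
  {F : Type*} [NormedAddCommGroup F] [NormedSpace ℂ F]

theorem Complex.norm_fderiv_le_of_forall_norm_le {g : Y → F} {t : Y} {r M : ℝ} (hr : 0 < r)
    (hd : DifferentiableOn ℂ g (ball t r)) (hbd : ∀ s ∈ ball t r, ‖g s‖ ≤ M) :
    ‖fderiv ℂ g t‖ ≤ 2 * M / r :=
  Complex.norm_fderiv_le_div_of_mapsTo_ball hd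
    (mapsTo_closedBall_two_mul_of_forall_norm_le (mem_ball_self hr) hbd) hr

-- Schwarz's lemma applied to `g` minus its affine approximation at `t`.
theorem Complex.norm_sub_sub_fderiv_le_of_forall_norm_le {g : Y → F} {t h : Y} {r M : ℝ}
    (hd : DifferentiableOn ℂ g (ball t r)) (hbd : ∀ s ∈ ball t r, ‖g s‖ ≤ M) (hh : ‖h‖ < r) :
    ‖g (t + h) - g t - fderiv ℂ g t h‖ ≤ 6 * M / r ^ 2 * ‖h‖ ^ 2 := by
  have hr : 0 < r := (norm_nonneg h).trans_lt hh
  have ht : t ∈ ball t r := mem_ball_self hr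
  have hM : 0 ≤ M := (norm_nonneg _).trans (hbd t ht)
  set D := fderiv ℂ g t
  set k : Y → F := fun s => g s - D (s - t)
  have hk : ∀ s, k s - k t = g s - g t - D (s - t) := fun s => by
    simp only [k, sub_self, map_zero, sub_zero]
    abel
  have hkd : DifferentiableOn ℂ k (ball t r) :=
    hd.sub (D.differentiable.comp_differentiableOn (differentiableOn_id.sub_const t))
  have hkbd : ∀ s ∈ ball t r, ‖k s‖ ≤ 3 * M := fun s hs => by
    calc ‖k s‖ ≤ ‖g s‖ + ‖D‖ * ‖s - t‖ :=
          (norm_sub_le _ _).trans (by gcongr; exact D.le_opNorm _)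
      _ ≤ M + 2 * M / r * r := by
          gcongr
          exacts [hbd s hs, Complex.norm_fderiv_le_of_forall_norm_le hr hd hbd,
            (mem_ball_iff_norm.mp hs).le]
      _ = 3 * M := by field_simp; ring
  have hko : (fun s => k s - k t) =o[𝓝 t] fun s => ‖s - t‖ ^ 1 := by
    simp only [pow_one, isLittleO_norm_right, hk]
    exact hasFDerivAt_iff_isLittleO.mp (hd.differentiableAt (isOpen_ball.mem_nhds ht)).hasFDerivAt
  have hschwarz := Complex.dist_le_mul_div_pow_of_mapsTo_ball_of_isLittleO hkd
    (mapsTo_closedBall_two_mul_of_forall_norm_le ht hkbd) hko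
    (show t + h ∈ ball t r by simpa using hh)
  rw [dist_eq_norm, dist_eq_norm, hk, add_sub_cancel_left] at hschwarz
  calc _ ≤ 2 * (3 * M) * (‖h‖ / r) ^ (1 + 1) := hschwarz
    _ = 6 * M / r ^ 2 * ‖h‖ ^ 2 := by ring

end CauchyEstimates

theorem earle_lemma_holomorphic_into_sup_norm_space_general
    {X Y : Type*} [NormedAddCommGroup X] [NormedSpace ℂ X]
    [NormedAddCommGroup Y] [NormedSpace ℂ Y]
    (E : Set X) (T : Set Y) (hT : IsOpen T)
    (φ : X → Y → ℂ) (M : ℝ)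
    (hbd : ∀ x ∈ E, ∀ t ∈ T, ‖φ x t‖ ≤ M)
    (hholx : ∀ t ∈ T, DifferentiableOn ℂ (fun x => φ x t) E)
    (hholt : ∀ x ∈ E, DifferentiableOn ℂ (fun t => φ x t) T)
    (Φ : Y → BoundedContinuousFunction E ℂ)
    (hΦ : ∀ t ∈ T, ∀ x : E, Φ t x = φ x t) :
    DifferentiableOn ℂ Φ T := by
  intro t ht
  obtain ⟨r, hr, hball⟩ := isOpen_iff.mp hT t ht
  obtain ⟨M₀, hM₀, hbd₀⟩ : ∃ M₀, 0 ≤ M₀ ∧ ∀ x : E, ∀ s ∈ ball t r, ‖φ x s‖ ≤ M₀ :=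
    ⟨max M 0, le_max_right M 0, fun x s hs => (hbd x x.2 s (hball hs)).trans (le_max_left M 0)⟩
  have hd (x : E) : DifferentiableOn ℂ (φ x) (ball t r) := (hholt x x.2).mono hball
  have hest (x : E) (h : Y) (hh : ‖h‖ < r) :
      ‖φ x (t + h) - φ x t - fderiv ℂ (φ x) t h‖ ≤ 6 * M₀ / r ^ 2 * ‖h‖ ^ 2 :=
    Complex.norm_sub_sub_fderiv_le_of_forall_norm_le (hd x) (hbd₀ x) hh
  let L := BoundedContinuousFunction.piCLM (fun x : E => fderiv ℂ (φ x) t)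
    (fun x => Complex.norm_fderiv_le_of_forall_norm_le hr (hd x) (hbd₀ x))
    (continuous_apply_of_norm_sub_sub_le_mul_sq hr
      (fun s hs => (hholx s (hball hs)).continuousOn.domRestrict) hest)
  have hL : HasFDerivAt Φ L t :=
    hasFDerivAt_of_norm_sub_sub_le_mul_sq (C := 6 * M₀ / r ^ 2) hr fun h hh => by
      have htT : t + h ∈ T := hball (by simpa using hh)
      refine (BoundedContinuousFunction.norm_le (by positivity)).mpr fun x => ?_
      simpa [L, hΦ _ htT, hΦ _ ht] using hest x h hh
  exact hL.differentiableAt.differentiableWithinAt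

/-- Earle's lemma: let `E ⊆ X`, `T ⊆ Y` be open subsets of complex Banach spaces and let
`φ : E × T → ℂ` be bounded, holomorphic in `x ∈ E` for each fixed `t ∈ T`, and holomorphic
in `t ∈ T` for each fixed `x ∈ E`.  Then the induced map `Φ : T → C_b(E, ℂ)`,
`Φ t = φ (·, t)`, into the Banach space of bounded continuous functions on `E` with the
sup norm, is holomorphic on `T`. -/
theorem earle_lemma_holomorphic_into_sup_norm_space
    {X Y : Type*} [NormedAddCommGroup X] [NormedSpace ℂ X] [CompleteSpace X]
    [NormedAddCommGroup Y] [NormedSpace ℂ Y] [CompleteSpace Y]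
    (E : Set X) (T : Set Y) (hE : IsOpen E) (hT : IsOpen T)
    (φ : X → Y → ℂ) (M : ℝ)
    (hbd : ∀ x ∈ E, ∀ t ∈ T, ‖φ x t‖ ≤ M)
    (hholx : ∀ t ∈ T, DifferentiableOn ℂ (fun x => φ x t) E)
    (hholt : ∀ x ∈ E, DifferentiableOn ℂ (fun t => φ x t) T)
    (Φ : Y → BoundedContinuousFunction E ℂ)
    (hΦ : ∀ t ∈ T, ∀ x : E, Φ t x = φ x t) :
    DifferentiableOn ℂ Φ T :=
  earle_lemma_holomorphic_into_sup_norm_space_general E T hT φ M hbd hholx hholt Φ hΦ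
end

section
/- Let Y be a complex Banach space, T ⊆ Y an open set, E a set, and φ : E × T → ℂ a function such that |φ(x, t)| ≤ M for all (x, t) ∈ E × T and, for each x ∈ E, the function t ↦ φ(x, t) is holomorphic on T. Let t ∈ T and v ∈ Y be such that t + ξ·v ∈ T for every ξ ∈ ℂ with |ξ| ≤ 1. Then there exists a function D : E → ℂ (the directional derivative of φ(x, ·) at t in direction v, given by D(x) = (1/(2πi)) ∮_{|ξ|=1} φ(x, t + ξ v) ξ^{-2} dξ) such that for every c ∈ ℂ with |c| ≤ 1/2, sup_{x ∈ E} |φ(x, t + c·v) − φ(x, t) − c·D(x)| ≤ 2M|c|². -/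
/-!
Along the complex line `ξ ↦ t + ξ • v` each `φ x` restricts to a holomorphic function `f` on the
closed unit disc. By the Cauchy integral formula at `c` and at `0`, and the partial fraction
identity `c² / (z² (z - c)) = (z - c)⁻¹ - z⁻¹ - c z⁻²`, the Taylor remainder
`f c - f 0 - c f'(0)` is `(2πi)⁻¹ ∮ c² f(z) / (z² (z - c)) dz`. On the unit circle
`|z - c| ≥ 1/2`, so the integrand is at most `2 M |c|²`, uniformly in `x`.
-/

open scoped Real
open Metric Complex Set

section TaylorRemainder

variable {F : Type*} [NormedAddCommGroup F] [NormedSpace ℂ F] [CompleteSpace F]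
  {f : ℂ → F} {R : ℝ} {c : ℂ}

theorem sub_sub_smul_circleIntegral_eq (hf : DifferentiableOn ℂ f (closedBall 0 R))
    (hc : c ∈ ball (0 : ℂ) R) :
    f c - f 0 - c • ((2 * π * I : ℂ)⁻¹ • ∮ z in C(0, R), (z ^ 2)⁻¹ • f z) =
      (2 * π * I : ℂ)⁻¹ • ∮ z in C(0, R), (c ^ 2 / (z ^ 2 * (z - c))) • f z := by
  have hR : 0 < R := pos_of_mem_ball hc
  have h0 : (0 : ℂ) ∈ ball 0 R := mem_ball_self hR
  have hcont : ContinuousOn f (sphere 0 R) := hf.continuousOn.mono sphere_subset_closedBall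
  have hsub : ∀ w ∈ ball (0 : ℂ) R, ∀ z ∈ sphere (0 : ℂ) R, z - w ≠ 0 := fun w hw z hz =>
    sub_ne_zero.mpr fun h =>
      (mem_ball_zero_iff.mp hw).ne (by rw [← h, mem_sphere_zero_iff_norm.mp hz])
  have hint : ∀ w ∈ ball (0 : ℂ) R, CircleIntegrable (fun z => (z - w)⁻¹ • f z) 0 R :=
    fun w hw => ContinuousOn.circleIntegrable hR.le <|
      ((continuousOn_id.sub continuousOn_const).inv₀ (hsub w hw)).smul hcont
  have hint2 : CircleIntegrable (fun z => c • (z ^ 2)⁻¹ • f z) 0 R := by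
    refine ContinuousOn.circleIntegrable hR.le (continuousOn_const.smul (.smul ?_ hcont))
    exact (continuousOn_id.pow 2).inv₀ fun z hz => pow_ne_zero 2 (by simpa using hsub 0 h0 z hz)
  have hsplit : EqOn (fun z => (c ^ 2 / (z ^ 2 * (z - c))) • f z)
      (fun z => (z - c)⁻¹ • f z - (z - 0)⁻¹ • f z - c • (z ^ 2)⁻¹ • f z) (sphere 0 R) := by
    intro z hz
    have := hsub 0 h0 z hz
    have := hsub c hc z hz
    simp only [sub_zero] at *
    simp only [← sub_smul, smul_smul]
    congr 1
    field_simp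
    ring
  have hint12 : CircleIntegrable (fun z => (z - c)⁻¹ • f z - (z - 0)⁻¹ • f z) 0 R :=
    (hint c hc).sub (hint 0 h0)
  rw [circleIntegral.integral_congr hR.le hsplit, circleIntegral.integral_sub hint12 hint2,
    circleIntegral.integral_sub (hint c hc) (hint 0 h0), circleIntegral.integral_smul, hf.circleIntegral_sub_inv_smul hc,
    hf.circleIntegral_sub_inv_smul h0, smul_sub, smul_sub, inv_smul_smul₀ two_pi_I_ne_zero,
    inv_smul_smul₀ two_pi_I_ne_zero, smul_comm]

theorem norm_sub_sub_smul_circleIntegral_le {M : ℝ} (hR : 0 < R)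
    (hf : DifferentiableOn ℂ f (closedBall 0 R)) (hM : ∀ z ∈ sphere (0 : ℂ) R, ‖f z‖ ≤ M)
    (hc : ‖c‖ ≤ R / 2) :
    ‖f c - f 0 - c • ((2 * π * I : ℂ)⁻¹ • ∮ z in C(0, R), (z ^ 2)⁻¹ • f z)‖ ≤
      2 * M * ‖c‖ ^ 2 / R ^ 2 := by
  rw [sub_sub_smul_circleIntegral_eq hf (mem_ball_zero_iff.mpr (by linarith))]
  calc _ ≤ R * (‖c‖ ^ 2 / (R ^ 2 * (R / 2)) * M) := by
        refine circleIntegral.norm_two_pi_i_inv_smul_integral_le_of_norm_le_const hR.le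
          fun z hz => ?_
        have hz : ‖z‖ = R := mem_sphere_zero_iff_norm.mp hz
        have hzc : R / 2 ≤ ‖z - c‖ := by linarith [norm_sub_norm_le z c]
        rw [norm_smul, norm_div, norm_mul, norm_pow, norm_pow, hz]
        gcongr
        exact hM z (mem_sphere_zero_iff_norm.mpr hz)
    _ = 2 * M * ‖c‖ ^ 2 / R ^ 2 := by field_simp

end TaylorRemainder

theorem directional_derivative_uniform_estimate_general
    {Y : Type*} [NormedAddCommGroup Y] [NormedSpace ℂ Y]
    {E : Type*} (T : Set Y)
    (φ : E → Y → ℂ) (M : ℝ)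
    (hbd : ∀ x, ∀ t ∈ T, ‖φ x t‖ ≤ M)
    (hhol : ∀ x, DifferentiableOn ℂ (φ x) T)
    (t : Y) (v : Y)
    (hv : ∀ ξ : ℂ, ‖ξ‖ ≤ 1 → t + ξ • v ∈ T) :
    ∃ D : E → ℂ,
      (∀ x, D x = (2 * (Real.pi : ℂ) * Complex.I)⁻¹ *
        ∮ ξ in C(0, 1), φ x (t + ξ • v) / ξ ^ 2) ∧
      ∀ c : ℂ, ‖c‖ ≤ 1 / 2 → ∀ x,
        ‖φ x (t + c • v) - φ x t - c * D x‖ ≤ 2 * M * ‖c‖ ^ 2 := by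
  refine ⟨_, fun x => rfl, fun c hc x => ?_⟩
  have hline : MapsTo (fun ξ : ℂ => t + ξ • v) (closedBall 0 1) T := fun ξ hξ =>
    hv ξ (mem_closedBall_zero_iff.mp hξ)
  have hf : DifferentiableOn ℂ (fun ξ : ℂ => φ x (t + ξ • v)) (closedBall 0 1) :=
    (hhol x).comp (by fun_prop) hline
  simpa [inv_mul_eq_div] using norm_sub_sub_smul_circleIntegral_le one_pos hf
    (fun z hz => hbd x _ (hline (sphere_subset_closedBall hz))) hc

/-- Let `T` be an open subset of a complex Banach space `Y`, `E` a set, and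
`φ : E × T → ℂ` bounded by `M` and holomorphic in `t ∈ T` for each fixed `x ∈ E`.
If `t ∈ T` and `v ∈ Y` are such that `t + ξ • v ∈ T` for all `|ξ| ≤ 1`, then the
directional derivative `D x = (2πi)⁻¹ ∮_{|ξ|=1} φ x (t + ξ v) ξ⁻² dξ` exists and
satisfies the uniform estimate
`sup_x |φ x (t + c v) − φ x t − c • D x| ≤ 2 M |c|²` for all `|c| ≤ 1/2`. -/
theorem directional_derivative_uniform_estimate
    {Y : Type*} [NormedAddCommGroup Y] [NormedSpace ℂ Y]
    {E : Type*} (T : Set Y) (hT : IsOpen T)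
    (φ : E → Y → ℂ) (M : ℝ)
    (hbd : ∀ x, ∀ t ∈ T, ‖φ x t‖ ≤ M)
    (hhol : ∀ x, DifferentiableOn ℂ (φ x) T)
    (t : Y) (ht : t ∈ T) (v : Y)
    (hv : ∀ ξ : ℂ, ‖ξ‖ ≤ 1 → t + ξ • v ∈ T) :
    ∃ D : E → ℂ,
      (∀ x, D x = (2 * (Real.pi : ℂ) * Complex.I)⁻¹ *
        ∮ ξ in C(0, 1), φ x (t + ξ • v) / ξ ^ 2) ∧
      ∀ c : ℂ, ‖c‖ ≤ 1 / 2 → ∀ x,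
        ‖φ x (t + c • v) - φ x t - c * D x‖ ≤ 2 * M * ‖c‖ ^ 2 :=
  directional_derivative_uniform_estimate_general T φ M hbd hhol t v hv
end

section
/- Let X, Y, Z be complex Banach spaces, let U ⊆ X and V ⊆ Y be open sets, and let f : U × V → Z be a function that is bounded in norm on U × V and separately holomorphic: for each y ∈ V the map x ↦ f(x, y) is holomorphic on U, and for each x ∈ U the map y ↦ f(x, y) is holomorphic on V. Then f is jointly holomorphic on U × V, i.e., f is complex Fréchet differentiable at every point of the open set U × V of the product Banach space X × Y. -/
/-!
Fix `p = (a, b)` and split `f q = f (q.1, b) + f (a, q.2) - f p + g q`. The first terms are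
differentiable at `p` because `f` is separately holomorphic, and the mixed difference `g`
vanishes on both axes through `p`. Applying the Schwarz lemma to `x ↦ g (x, y)` and then to
`y ↦ g (x, y)` gives `‖g (x, y)‖ ≤ C ‖x - a‖ ‖y - b‖`, so `g = O(‖q - p‖²)` and `g` has
derivative `0` at `p`.
-/

open Metric Set Asymptotics Filter Topology

section MixedDifference

variable {E F G : Type*}

def mixedDifference [AddCommGroup G] (f : E × F → G) (p q : E × F) : G :=
  f q - f (q.1, p.2) - f (p.1, q.2) + f p

@[simp]
lemma mixedDifference_fst_eq [AddCommGroup G] (f : E × F → G) (p : E × F) (y : F) :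
    mixedDifference f p (p.1, y) = 0 := by
  simp [mixedDifference]

@[simp]
lemma mixedDifference_snd_eq [AddCommGroup G] (f : E × F → G) (p : E × F) (x : E) :
    mixedDifference f p (x, p.2) = 0 := by
  simp [mixedDifference]

lemma norm_mixedDifference_le [SeminormedAddCommGroup G] {f : E × F → G} {s : Set E}
    {t : Set F} {M : ℝ} (hbd : ∀ q ∈ s ×ˢ t, ‖f q‖ ≤ M) {a x : E} {b y : F} (ha : a ∈ s)
    (hx : x ∈ s) (hb : b ∈ t) (hy : y ∈ t) :
    ‖mixedDifference f (a, b) (x, y)‖ ≤ 4 * M :=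
  calc ‖mixedDifference f (a, b) (x, y)‖
      ≤ ‖f (x, y)‖ + ‖f (x, b)‖ + ‖f (a, y)‖ + ‖f (a, b)‖ := by
        unfold mixedDifference
        grw [norm_add_le, norm_sub_le, norm_sub_le]
    _ ≤ M + M + M + M := by
        gcongr <;> exact hbd _ ⟨by assumption, by assumption⟩
    _ = 4 * M := by ring

lemma differentiableAt_of_differentiableAt_mixedDifference {𝕜 : Type*}
    [NontriviallyNormedField 𝕜] [NormedAddCommGroup E] [NormedSpace 𝕜 E]
    [NormedAddCommGroup F] [NormedSpace 𝕜 F] [NormedAddCommGroup G] [NormedSpace 𝕜 G]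
    {f : E × F → G} {p : E × F}
    (hx : DifferentiableAt 𝕜 (fun x => f (x, p.2)) p.1)
    (hy : DifferentiableAt 𝕜 (fun y => f (p.1, y)) p.2)
    (hg : DifferentiableAt 𝕜 (mixedDifference f p) p) :
    DifferentiableAt 𝕜 f p := by
  have hsplit : f = fun q => f (q.1, p.2) + f (p.1, q.2) - f p + mixedDifference f p q := by
    ext q
    simp only [mixedDifference]
    abel
  rw [hsplit]
  exact (((hx.comp p differentiableAt_fst).add (hy.comp p differentiableAt_snd)).sub_const _).add hg

end MixedDifference

section Schwarz

variable {E F G : Type*} [NormedAddCommGroup E] [NormedSpace ℂ E]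
  [NormedAddCommGroup F] [NormedSpace ℂ F] [NormedAddCommGroup G] [NormedSpace ℂ G]

lemma norm_le_div_mul_norm_sub_of_eq_zero {h : E → G} {c z : E} {R C : ℝ}
    (hd : DifferentiableOn ℂ h (ball c R)) (hc : h c = 0) (hb : ∀ w ∈ ball c R, ‖h w‖ ≤ C)
    (hz : z ∈ ball c R) : ‖h z‖ ≤ C / R * ‖z - c‖ := by
  have hmaps : MapsTo h (ball c R) (closedBall (h c) C) := fun w hw => by
    simpa [hc] using hb w hw
  simpa [hc, dist_eq_norm] using Complex.dist_le_div_mul_dist_of_mapsTo_ball hd hmaps hz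

variable {f : E × F → G} {a : E} {b : F} {R₁ R₂ M : ℝ}

lemma norm_mixedDifference_le_mul
    (hbd : ∀ q ∈ ball a R₁ ×ˢ ball b R₂, ‖f q‖ ≤ M)
    (h₁ : ∀ y ∈ ball b R₂, DifferentiableOn ℂ (fun x => f (x, y)) (ball a R₁))
    (h₂ : ∀ x ∈ ball a R₁, DifferentiableOn ℂ (fun y => f (x, y)) (ball b R₂))
    {x : E} {y : F} (hx : x ∈ ball a R₁) (hy : y ∈ ball b R₂) :
    ‖mixedDifference f (a, b) (x, y)‖ ≤ 4 * M / (R₁ * R₂) * (‖x - a‖ * ‖y - b‖) := by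
  have ha : a ∈ ball a R₁ := mem_ball_self (pos_of_mem_ball hx)
  have hb : b ∈ ball b R₂ := mem_ball_self (pos_of_mem_ball hy)
  have hschwarz_x : ∀ y ∈ ball b R₂,
      ‖mixedDifference f (a, b) (x, y)‖ ≤ 4 * M / R₁ * ‖x - a‖ := fun y hy =>
    norm_le_div_mul_norm_sub_of_eq_zero
      ((((h₁ y hy).sub (h₁ b hb)).sub_const _).add_const _) (mixedDifference_fst_eq f (a, b) y)
      (fun w hw => norm_mixedDifference_le hbd ha hw hb hy) hx
  have hd : DifferentiableOn ℂ (fun y => mixedDifference f (a, b) (x, y)) (ball b R₂) :=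
    (((h₂ x hx).sub_const (f (x, b))).sub (h₂ a ha)).add_const (f (a, b))
  calc ‖mixedDifference f (a, b) (x, y)‖
      ≤ 4 * M / R₁ * ‖x - a‖ / R₂ * ‖y - b‖ :=
        norm_le_div_mul_norm_sub_of_eq_zero hd (mixedDifference_snd_eq f (a, b) x) hschwarz_x hy
    _ = 4 * M / (R₁ * R₂) * (‖x - a‖ * ‖y - b‖) := by ring

lemma differentiableAt_mixedDifference (hR₁ : 0 < R₁) (hR₂ : 0 < R₂)
    (hbd : ∀ q ∈ ball a R₁ ×ˢ ball b R₂, ‖f q‖ ≤ M)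
    (h₁ : ∀ y ∈ ball b R₂, DifferentiableOn ℂ (fun x => f (x, y)) (ball a R₁))
    (h₂ : ∀ x ∈ ball a R₁, DifferentiableOn ℂ (fun y => f (x, y)) (ball b R₂)) :
    DifferentiableAt ℂ (mixedDifference f (a, b)) (a, b) := by
  suffices mixedDifference f (a, b) =O[𝓝 (a, b)] fun q => ‖q - (a, b)‖ ^ 2 from
    (this.hasFDerivAt one_lt_two).differentiableAt
  refine IsBigO.of_bound (4 * M / (R₁ * R₂)) ?_
  filter_upwards [prod_mem_nhds (ball_mem_nhds a hR₁) (ball_mem_nhds b hR₂)]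
    with ⟨x, y⟩ ⟨hx, hy⟩
  have hxa : ‖x - a‖ ≤ ‖(x, y) - (a, b)‖ := norm_fst_le ((x, y) - (a, b))
  have hyb : ‖y - b‖ ≤ ‖(x, y) - (a, b)‖ := norm_snd_le ((x, y) - (a, b))
  have hM : 0 ≤ 4 * M / (R₁ * R₂) := by
    have := (norm_nonneg _).trans (hbd (a, b) ⟨mem_ball_self hR₁, mem_ball_self hR₂⟩)
    positivity
  calc ‖mixedDifference f (a, b) (x, y)‖
      ≤ 4 * M / (R₁ * R₂) * (‖x - a‖ * ‖y - b‖) := norm_mixedDifference_le_mul hbd h₁ h₂ hx hy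
    _ ≤ 4 * M / (R₁ * R₂) * ‖‖(x, y) - (a, b)‖ ^ 2‖ := by
        rw [norm_pow, norm_norm, sq]
        gcongr

end Schwarz

theorem hartogs_banach_bounded_separately_holomorphic_general
    {X Y Z : Type*} [NormedAddCommGroup X] [NormedSpace ℂ X]
    [NormedAddCommGroup Y] [NormedSpace ℂ Y]
    [NormedAddCommGroup Z] [NormedSpace ℂ Z]
    (U : Set X) (V : Set Y) (hU : IsOpen U) (hV : IsOpen V)
    (f : X × Y → Z) (M : ℝ)
    (hbd : ∀ p ∈ U ×ˢ V, ‖f p‖ ≤ M)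
    (h1 : ∀ y ∈ V, DifferentiableOn ℂ (fun x => f (x, y)) U)
    (h2 : ∀ x ∈ U, DifferentiableOn ℂ (fun y => f (x, y)) V) :
    DifferentiableOn ℂ f (U ×ˢ V) := by
  rintro ⟨a, b⟩ ⟨ha, hb⟩
  obtain ⟨R₁, hR₁, haU⟩ := isOpen_iff.1 hU a ha
  obtain ⟨R₂, hR₂, hbV⟩ := isOpen_iff.1 hV b hb
  have hg : DifferentiableAt ℂ (mixedDifference f (a, b)) (a, b) :=
    differentiableAt_mixedDifference hR₁ hR₂ (fun q hq => hbd q (prod_mono haU hbV hq))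
      (fun y hy => (h1 y (hbV hy)).mono haU) (fun x hx => (h2 x (haU hx)).mono hbV)
  exact (differentiableAt_of_differentiableAt_mixedDifference
    ((h1 b hb).differentiableAt (hU.mem_nhds ha)) ((h2 a ha).differentiableAt (hV.mem_nhds hb))
    hg).differentiableWithinAt

/-- Hartogs' theorem for complex Banach spaces: a bounded, separately holomorphic map
`f : U × V → Z` on a product of open subsets of complex Banach spaces is jointly
holomorphic on `U ×ˢ V`. -/
theorem hartogs_banach_bounded_separately_holomorphic
    {X Y Z : Type*} [NormedAddCommGroup X] [NormedSpace ℂ X] [CompleteSpace X]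
    [NormedAddCommGroup Y] [NormedSpace ℂ Y] [CompleteSpace Y]
    [NormedAddCommGroup Z] [NormedSpace ℂ Z] [CompleteSpace Z]
    (U : Set X) (V : Set Y) (hU : IsOpen U) (hV : IsOpen V)
    (f : X × Y → Z) (M : ℝ)
    (hbd : ∀ p ∈ U ×ˢ V, ‖f p‖ ≤ M)
    (h1 : ∀ y ∈ V, DifferentiableOn ℂ (fun x => f (x, y)) U)
    (h2 : ∀ x ∈ U, DifferentiableOn ℂ (fun y => f (x, y)) V) :
    DifferentiableOn ℂ f (U ×ˢ V) :=
  hartogs_banach_bounded_separately_holomorphic_general U V hU hV f M hbd h1 h2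
end
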